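/- Under the same ε-differential privacy assumption, the expected success of the context-free optimal attack is bounded: ∑_y Pr(y)·max_{x'} Pr(x'|y) ≤ e^ε · max_{x'} π(x'), where Pr(y) = ∑_x Pr(M(x)=y)π(x). -/
import Mathlib


/-- Under `ε`-DP, the expected success of the context-free optimal attack
satisfies `∑_y Pr(y) · max_{x'} Pr(x'|y) ≤ e^ε · max_{x'} π(x')`, where
`Pr(y) = ∑ x, Pr(M(x)=y) π x` (terms with `Pr(y) = 0` vanish, consistent with the
convention `z / 0 = 0`). -/
theorem dp_expected_bayes_success_le_exp_eps_prior_max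
    {X Y : Type*} [Fintype X] [Nonempty X] [Fintype Y]
    (M : X → Y → ℝ) (hM0 : ∀ x y, 0 ≤ M x y) (hM1 : ∀ x, ∑ y, M x y = 1)
    (ε : ℝ) (hε : 0 ≤ ε)
    (hDP : ∀ x x' y, M x y ≤ Real.exp ε * M x' y)
    (π : X → ℝ) (hπ0 : ∀ x, 0 ≤ π x) (hπ1 : ∑ x, π x = 1) :
    ∑ y, (∑ x, M x y * π x) *
        (Finset.univ.sup' Finset.univ_nonempty
          (fun x' => M x' y * π x' / ∑ x, M x y * π x))
      ≤ Real.exp ε * Finset.univ.sup' Finset.univ_nonempty π := by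
  obtain ⟨x0⟩ := (inferInstance : Nonempty X)
  have hsupπ : ∀ x, π x ≤ Finset.univ.sup' Finset.univ_nonempty π :=
    fun x => Finset.le_sup' π (Finset.mem_univ x)
  have key : ∀ y, (∑ x, M x y * π x) *
        (Finset.univ.sup' Finset.univ_nonempty
          (fun x' => M x' y * π x' / ∑ x, M x y * π x))
      ≤ Real.exp ε * M x0 y * Finset.univ.sup' Finset.univ_nonempty π := by
    intro y
    set P := ∑ x, M x y * π x with hP
    have hP0 : 0 ≤ P := Finset.sum_nonneg fun x _ => mul_nonneg (hM0 x y) (hπ0 x)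
    obtain ⟨x', _, hx'⟩ := Finset.exists_mem_eq_sup' (Finset.univ_nonempty (α := X))
      (fun x' => M x' y * π x' / P)
    rw [hx']
    have h1 : P * (M x' y * π x' / P) ≤ M x' y * π x' := by
      rcases eq_or_lt_of_le hP0 with h | h
      · simp [← h, mul_nonneg (hM0 x' y) (hπ0 x')]
      · rw [mul_div_cancel₀ _ (ne_of_gt h)]
    refine h1.trans ?_
    have h2 : M x' y * π x' ≤ (Real.exp ε * M x0 y) * π x' :=
      mul_le_mul_of_nonneg_right (hDP x' x0 y) (hπ0 x')
    refine h2.trans ?_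
    exact mul_le_mul_of_nonneg_left (hsupπ x')
      (mul_nonneg (Real.exp_pos ε).le (hM0 x0 y))
  calc ∑ y, (∑ x, M x y * π x) *
        (Finset.univ.sup' Finset.univ_nonempty
          (fun x' => M x' y * π x' / ∑ x, M x y * π x))
      ≤ ∑ y, Real.exp ε * M x0 y * Finset.univ.sup' Finset.univ_nonempty π :=
        Finset.sum_le_sum fun y _ => key y
    _ = Real.exp ε * Finset.univ.sup' Finset.univ_nonempty π := by
        rw [← Finset.sum_mul, ← Finset.mul_sum, hM1 x0, mul_one]
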